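/- Let h>0 and 0<s<1/2. There exist positive constants c_s, C_s and d_s≤D_s, depending only on s, such that for every m∈ℤ∖{0}: d_s·h^{2s}/|m|^{1−2s} ≤ K_{-s}^h(m) ≤ D_s·h^{2s}/|m|^{1−2s}, and |K_{-s}^h(m) − c_s·h^{2s}/|m|^{1−2s}| ≤ C_s·h^{2s}/|m|^{2−2s}. -/

import Mathlib

/-- The kernel of the fractional discrete integral (negative power) on the mesh of size `h`:
`K_{-s}^h(m) = (4^{-s} Γ(1/2-s)/(√π Γ(s))) · h^{2s} Γ(|m|+s)/Γ(|m|+1-s)`. -/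
noncomputable def Knsh (h s : ℝ) (m : ℤ) : ℝ :=
  ((4 : ℝ) ^ (-s) * Real.Gamma (1/2 - s) / (Real.sqrt Real.pi * Real.Gamma s)) *
    (h ^ (2 * s) * Real.Gamma (|(m : ℝ)| + s) / Real.Gamma (|(m : ℝ)| + 1 - s))

/-!
For `n = |m| ≥ 1`, log-convexity of `Γ` gives Gautschi's inequalities
`(n + s) ^ (2s - 1) ≤ Γ(n + s) / Γ(n + 1 - s) ≤ (n - s) ^ (2s - 1)`.
On `[x, y]` the function `t ↦ t ^ (-q)`, `q ≤ 1`, varies by at most the relative width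
`(y - x) / x` times its value at `y`, so both Gautschi bounds lie within `2s · n ^ (2s - 2)` of
`n ^ (2s - 1)`. This is the asymptotic estimate with `c` the prefactor of the kernel and
`C = 2s · c`; since `n ^ (2s - 2) ≤ n ^ (2s - 1)`, it also gives `d, D = (1 ∓ 2s) · c`.
-/

open Real

theorem Gamma_add_le_Gamma_mul_rpow {x p : ℝ} (hx : 0 < x) (hp0 : 0 < p) (hp1 : p < 1) :
    Gamma (x + p) ≤ Gamma x * x ^ p := by
  have hconv := Gamma_mul_add_mul_le_rpow_Gamma_mul_rpow_Gamma hx (by linarith : 0 < x + 1)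
    (sub_pos.2 hp1) hp0 (sub_add_cancel 1 p)
  have hG := Gamma_pos_of_pos hx
  rw [show (1 - p) * x + p * (x + 1) = x + p by ring, Gamma_add_one hx.ne'] at hconv
  calc Gamma (x + p) ≤ Gamma x ^ (1 - p) * (x * Gamma x) ^ p := hconv
    _ = Gamma x ^ (1 - p) * Gamma x ^ p * x ^ p := by rw [mul_rpow hx.le hG.le]; ring
    _ = Gamma x * x ^ p := by rw [← rpow_add hG, sub_add_cancel, rpow_one]

theorem one_div_rpow_le_Gamma_div_Gamma_add {x p : ℝ} (hx : 0 < x) (hp0 : 0 < p) (hp1 : p < 1) :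
    1 / x ^ p ≤ Gamma x / Gamma (x + p) := by
  rw [div_le_div_iff₀ (rpow_pos_of_pos hx p) (Gamma_pos_of_pos (by linarith)), one_mul]
  exact Gamma_add_le_Gamma_mul_rpow hx hp0 hp1

theorem Gamma_div_Gamma_add_le_one_div_rpow {x p : ℝ} (hp0 : 0 < p) (hp1 : p < 1)
    (hx : 1 - p < x) : Gamma x / Gamma (x + p) ≤ 1 / (x + p - 1) ^ p := by
  set y := x + p - 1
  have hy : 0 < y := by linarith
  have hshift : Gamma x ≤ Gamma y * y ^ (1 - p) := by
    simpa [y] using Gamma_add_le_Gamma_mul_rpow hy (sub_pos.2 hp1) (by linarith)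
  have hrec : Gamma (x + p) = y * Gamma y := by
    rw [← Gamma_add_one hy.ne']; congr 1; ring
  rw [rpow_sub hy, rpow_one] at hshift
  rw [div_le_div_iff₀ (Gamma_pos_of_pos (by linarith)) (rpow_pos_of_pos hy p), hrec]
  calc Gamma x * y ^ p ≤ Gamma y * (y / y ^ p) * y ^ p := by gcongr
    _ = 1 * (y * Gamma y) := by field_simp

theorem one_div_rpow_sub_one_div_rpow_le {x y p : ℝ} (hx : 0 < x) (hxy : x ≤ y) (hp : p ≤ 1) :
    1 / x ^ p - 1 / y ^ p ≤ (y - x) / x * (1 / y ^ p) := by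
  have hy : 0 < y := hx.trans_le hxy
  have hratio : (y / x) ^ p ≤ y / x := by
    simpa using rpow_le_rpow_of_exponent_le ((one_le_div hx).2 hxy) hp
  have hsplit : 1 / x ^ p = (y / x) ^ p * (1 / y ^ p) := by
    rw [div_rpow hy.le hx.le]; field_simp
  calc 1 / x ^ p - 1 / y ^ p = ((y / x) ^ p - 1) * (1 / y ^ p) := by rw [hsplit]; ring
    _ ≤ (y / x - 1) * (1 / y ^ p) := by gcongr
    _ = (y - x) / x * (1 / y ^ p) := by field_simp

theorem abs_Gamma_div_Gamma_sub_one_div_rpow_le {s n : ℝ} (hs0 : 0 < s) (hs1 : s < 1 / 2)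
    (hn : 1 ≤ n) :
    |Gamma (n + s) / Gamma (n + 1 - s) - 1 / n ^ (1 - 2 * s)| ≤ 2 * s / n ^ (2 - 2 * s) := by
  have hn0 : 0 < n := by linarith
  have hq : 1 - 2 * s ≤ 1 := by linarith
  have hratio_ge : 1 / (n + s) ^ (1 - 2 * s) ≤ Gamma (n + s) / Gamma (n + 1 - s) := by
    convert one_div_rpow_le_Gamma_div_Gamma_add (by linarith : 0 < n + s)
      (by linarith : 0 < 1 - 2 * s) (by linarith) using 3
    ring
  have hratio_le : Gamma (n + s) / Gamma (n + 1 - s) ≤ 1 / (n - s) ^ (1 - 2 * s) := by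
    convert Gamma_div_Gamma_add_le_one_div_rpow (by linarith : 0 < 1 - 2 * s) (by linarith)
      (by linarith : 1 - (1 - 2 * s) < n + s) using 3 <;> ring
  have hgap : 1 / n * (1 / n ^ (1 - 2 * s)) = 1 / n ^ (2 - 2 * s) := by
    rw [show 2 - 2 * s = 1 + (1 - 2 * s) by ring, rpow_add hn0, rpow_one]; field_simp
  have hupper : 1 / (n - s) ^ (1 - 2 * s) - 1 / n ^ (1 - 2 * s) ≤ 2 * s / n ^ (2 - 2 * s) := by
    calc _ ≤ (n - (n - s)) / (n - s) * (1 / n ^ (1 - 2 * s)) :=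
          one_div_rpow_sub_one_div_rpow_le (by linarith) (by linarith) hq
      _ ≤ 2 * s / n * (1 / n ^ (1 - 2 * s)) := by
          refine mul_le_mul_of_nonneg_right ?_ (by positivity)
          -- `n - s ≥ n / 2` because `n ≥ 1 > 2s`
          rw [div_le_div_iff₀ (by linarith) hn0]; nlinarith
      _ = 2 * s * (1 / n * (1 / n ^ (1 - 2 * s))) := by ring
      _ = 2 * s / n ^ (2 - 2 * s) := by rw [hgap]; ring
  have hlower : 1 / n ^ (1 - 2 * s) - 1 / (n + s) ^ (1 - 2 * s) ≤ 2 * s / n ^ (2 - 2 * s) := by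
    calc _ ≤ (n + s - n) / n * (1 / (n + s) ^ (1 - 2 * s)) :=
          one_div_rpow_sub_one_div_rpow_le hn0 (by linarith) hq
      _ ≤ 2 * s / n * (1 / n ^ (1 - 2 * s)) := by
          gcongr <;> linarith
      _ = 2 * s * (1 / n * (1 / n ^ (1 - 2 * s))) := by ring
      _ = 2 * s / n ^ (2 - 2 * s) := by rw [hgap]; ring
  rw [abs_le]; constructor <;> linarith

theorem fracInt_kernel_estimates (s : ℝ) (hs0 : 0 < s) (hs1 : s < 1/2) :
    ∃ c C d D : ℝ, 0 < c ∧ 0 < C ∧ 0 < d ∧ d ≤ D ∧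
      ∀ h : ℝ, 0 < h → ∀ m : ℤ, m ≠ 0 →
        d * h ^ (2 * s) / |(m : ℝ)| ^ (1 - 2 * s) ≤ Knsh h s m ∧
        Knsh h s m ≤ D * h ^ (2 * s) / |(m : ℝ)| ^ (1 - 2 * s) ∧
        |Knsh h s m - c * h ^ (2 * s) / |(m : ℝ)| ^ (1 - 2 * s)| ≤
          C * h ^ (2 * s) / |(m : ℝ)| ^ (2 - 2 * s) := by
  set A := (4 : ℝ) ^ (-s) * Gamma (1/2 - s) / (√π * Gamma s)
  have hA : 0 < A := div_pos (mul_pos (by positivity) (Gamma_pos_of_pos (by linarith)))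
    (mul_pos (by positivity) (Gamma_pos_of_pos hs0))
  refine ⟨A, 2 * s * A, (1 - 2 * s) * A, (1 + 2 * s) * A, hA, by positivity,
    mul_pos (by linarith) hA, by nlinarith, fun h hh m hm => ?_⟩
  set n := |(m : ℝ)|
  set R := Gamma (n + s) / Gamma (n + 1 - s)
  set B := A * h ^ (2 * s)
  have hB : 0 < B := mul_pos hA (by positivity)
  have hn : 1 ≤ n := by
    simp only [n, ← Int.cast_abs]; exact_mod_cast Int.one_le_abs hm
  have hK : Knsh h s m = B * R := by simp only [Knsh, B, R, A, n]; ring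
  obtain ⟨hlo, hhi⟩ := abs_le.1 (abs_Gamma_div_Gamma_sub_one_div_rpow_le hs0 hs1 hn)
  have hdecay : 2 * s / n ^ (2 - 2 * s) ≤ 2 * s * (1 / n ^ (1 - 2 * s)) := by
    rw [mul_one_div]
    exact div_le_div_of_nonneg_left (by positivity) (by positivity)
      (rpow_le_rpow_of_exponent_le hn (by linarith))
  rw [hK]
  refine ⟨?_, ?_, ?_⟩
  · calc (1 - 2 * s) * A * h ^ (2 * s) / n ^ (1 - 2 * s)
        = B * ((1 - 2 * s) * (1 / n ^ (1 - 2 * s))) := by ring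
      _ ≤ B * R := by gcongr; linarith
  · calc B * R ≤ B * ((1 + 2 * s) * (1 / n ^ (1 - 2 * s))) := by gcongr; linarith
      _ = (1 + 2 * s) * A * h ^ (2 * s) / n ^ (1 - 2 * s) := by ring
  · calc |B * R - B / n ^ (1 - 2 * s)| = B * |R - 1 / n ^ (1 - 2 * s)| := by
          rw [← mul_one_div B, ← mul_sub, abs_mul, abs_of_pos hB]
      _ ≤ B * (2 * s / n ^ (2 - 2 * s)) := by gcongr; exact abs_le.2 ⟨hlo, hhi⟩
      _ = 2 * s * A * h ^ (2 * s) / n ^ (2 - 2 * s) := by ring
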